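/- Lemma 2.2, last part (the vertex weight is the algebraic area of the dual face, vertex-star form). Let (m, p_0, p) be a spherical vertex star with vertex weight d_0. For each j ∈ ZMod m let n_j ∈ ℝ³ be the unique vector with ⟨n_j, p_0⟩ = ⟨n_j, p_j⟩ = ⟨n_j, p_{j+1}⟩ = 1 (the dual vertex of the triangle (p_0, p_j, p_{j+1})). Then the algebraic area of the dual polygon (n_j)_{j∈ZMod m}, namely (1/2)·∑_{j∈ZMod m} det(p_0, n_{j−1}, n_j), equals d_0. -/

import Mathlib

noncomputable section

/-- Standard inner product on `ℝ³`. -/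
def dot3 (x y : Fin 3 → ℝ) : ℝ := x 0 * y 0 + x 1 * y 1 + x 2 * y 2

/-- Euclidean norm on `ℝ³`. -/
def norm3 (x : Fin 3 → ℝ) : ℝ := Real.sqrt (dot3 x x)

/-- Cross product on `ℝ³`. -/
def cross3 (x y : Fin 3 → ℝ) : Fin 3 → ℝ :=
  ![x 1 * y 2 - x 2 * y 1, x 2 * y 0 - x 0 * y 2, x 0 * y 1 - x 1 * y 0]

/-- Determinant of three vectors in `ℝ³`. -/
def det3 (x y z : Fin 3 → ℝ) : ℝ := dot3 (cross3 x y) z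

/-- Spherical angle at `a` between `b` and `c` (all unit vectors). -/
def sphAngle (a b c : Fin 3 → ℝ) : ℝ :=
  Real.arccos (dot3 (b - dot3 a b • a) (c - dot3 a c • a) /
    (norm3 (b - dot3 a b • a) * norm3 (c - dot3 a c • a)))

/-- Edge weight `c_j` of the edge `(p₀, p_j)` of a spherical vertex star. -/
def sphStarWeight (m : ℕ) (p0 : Fin 3 → ℝ) (p : ZMod m → Fin 3 → ℝ) (j : ZMod m) : ℝ :=
  (Real.tan ((sphAngle p0 (p j) (p (j+1)) + sphAngle (p j) (p (j+1)) p0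
      - sphAngle (p (j+1)) p0 (p j)) / 2)
   + Real.tan ((sphAngle p0 (p (j-1)) (p j) + sphAngle (p j) p0 (p (j-1))
      - sphAngle (p (j-1)) (p j) p0) / 2))
  / (2 * Real.cos (Real.arccos (dot3 p0 (p j)) / 2) ^ 2)

/-- Vertex weight `d₀` of a spherical vertex star. -/
def sphStarVertexWeight (m : ℕ) [NeZero m] (p0 : Fin 3 → ℝ) (p : ZMod m → Fin 3 → ℝ) : ℝ :=
  ∑ j : ZMod m, sphStarWeight m p0 p j * Real.sin (Real.arccos (dot3 p0 (p j)) / 2) ^ 2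

/-!
The identity holds summand by summand. The dual vertices `n (j - 1)` and `n j` both lie on the
planes `⟪·, p₀⟫ = 1` and `⟪·, p j⟫ = 1`, so their difference is parallel to `p₀ × p j`; this
reduces `det (p₀, n (j - 1), n j)` to `det (p₀, p j, n j) - det (p₀, p j, n (j - 1))`, and by
Cauchy–Binet these are Gram determinants in the inner products of the `p`'s.

On the angle side, the half-angle tangent of the spherical angle at `a` in the triangle `(a, b, c)`
is `det (a, b, c) / (sin ∠ab · sin ∠ac + cos ∠bc - cos ∠ab · cos ∠ac)`. The tangent addition
formula then gives `tan ((α_a + α_b - α_c) / 2) = (1 + ⟪a, b⟫ - ⟪a, c⟫ - ⟪b, c⟫) / det (a, b, c)`,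
a polynomial identity modulo `sin² + cos² = 1` and the Gram formula for `det²`.
-/

open Real

lemma dot3_comm (x y : Fin 3 → ℝ) : dot3 x y = dot3 y x := by
  simp only [dot3]; ring

lemma dot3_self_nonneg (x : Fin 3 → ℝ) : 0 ≤ dot3 x x :=
  add_nonneg (add_nonneg (mul_self_nonneg _) (mul_self_nonneg _)) (mul_self_nonneg _)

lemma dot3_self_eq_one_of_norm3_eq_one {x : Fin 3 → ℝ} (h : norm3 x = 1) : dot3 x x = 1 :=
  sqrt_eq_one.mp h

lemma det3_rotate (a b c : Fin 3 → ℝ) : det3 b c a = det3 a b c := by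
  simp only [det3, dot3, cross3, Matrix.cons_val]; ring

lemma det3_swap₁₂ (a b c : Fin 3 → ℝ) : det3 b a c = -det3 a b c := by
  simp only [det3, dot3, cross3, Matrix.cons_val]; ring

lemma det3_swap₂₃ (a b c : Fin 3 → ℝ) : det3 a c b = -det3 a b c := by
  simp only [det3, dot3, cross3, Matrix.cons_val]; ring

lemma det3_mul_det3 (a b c x y z : Fin 3 → ℝ) :
    det3 a b c * det3 x y z =
      !![dot3 a x, dot3 a y, dot3 a z; dot3 b x, dot3 b y, dot3 b z;
        dot3 c x, dot3 c y, dot3 c z].det := by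
  simp only [Matrix.det_fin_three, Matrix.of_apply, Matrix.cons_val, det3, dot3, cross3]
  ring

lemma dot3_sq_add_dot3_cross3_self (x y : Fin 3 → ℝ) :
    dot3 x y ^ 2 + dot3 (cross3 x y) (cross3 x y) = dot3 x x * dot3 y y := by
  simp only [dot3, cross3, Matrix.cons_val]; ring

lemma dot3_sq_le (x y : Fin 3 → ℝ) : dot3 x y ^ 2 ≤ dot3 x x * dot3 y y := by
  linarith [dot3_sq_add_dot3_cross3_self x y, dot3_self_nonneg (cross3 x y)]

lemma dot3_sub_smul_sub_smul (a b c : Fin 3 → ℝ) (s t : ℝ) :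
    dot3 (b - s • a) (c - t • a)
      = dot3 b c - s * dot3 a c - t * dot3 a b + s * t * dot3 a a := by
  simp only [dot3, Pi.sub_apply, Pi.smul_apply, smul_eq_mul]; ring

lemma Real.tan_half_eq_sin_div_one_add_cos (x : ℝ) : tan (x / 2) = sin x / (1 + cos x) := by
  have hsin : sin x = 2 * sin (x / 2) * cos (x / 2) := by
    rw [← sin_two_mul, mul_div_cancel₀ x two_ne_zero]
  have hcos : 1 + cos x = 2 * cos (x / 2) ^ 2 := by
    rw [cos_sq, mul_div_cancel₀ x two_ne_zero]; ring
  rw [tan_eq_sin_div_cos, hsin, hcos]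
  -- when `cos (x / 2) = 0` both sides are the junk value `0`
  rcases eq_or_ne (cos (x / 2)) 0 with h | h
  · simp [h]
  · field_simp

lemma Real.tan_add_sub {x y z : ℝ} (hx : cos x ≠ 0) (hy : cos y ≠ 0) (hz : cos z ≠ 0) :
    tan (x + y - z) = (tan x + tan y - tan z + tan x * tan y * tan z)
      / (1 - tan x * tan y + tan x * tan z + tan y * tan z) := by
  have hxyz : cos x * cos y * cos z ≠ 0 := mul_ne_zero (mul_ne_zero hx hy) hz
  have hnum : tan x + tan y - tan z + tan x * tan y * tan z
      = sin (x + y - z) / (cos x * cos y * cos z) := by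
    simp only [tan_eq_sin_div_cos, sin_sub, sin_add, cos_add]
    field_simp; ring
  have hden : 1 - tan x * tan y + tan x * tan z + tan y * tan z
      = cos (x + y - z) / (cos x * cos y * cos z) := by
    simp only [tan_eq_sin_div_cos, cos_sub, sin_add, cos_add]
    field_simp; ring
  -- if `cos (x + y - z) = 0`, both sides are the junk value `0`
  rw [hnum, hden, div_div_div_cancel_right₀ hxyz, tan_eq_sin_div_cos]

lemma tan_half_arccos_div {s e D : ℝ} (hs : 0 < s) (hD : 0 ≤ D) (h : s ^ 2 - e ^ 2 = D ^ 2) :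
    tan (arccos (e / s) / 2) = D / (s + e) := by
  have hq : 1 - (e / s) ^ 2 = (D / s) ^ 2 := by field_simp; linarith
  have hq1 : (e / s) ^ 2 ≤ 1 := by nlinarith [sq_nonneg (D / s)]
  rw [tan_half_eq_sin_div_one_add_cos, sin_arccos, hq, sqrt_sq (by positivity),
    cos_arccos (by nlinarith) (by nlinarith), one_add_div hs.ne', div_div_div_cancel_right₀ hs.ne']

lemma cos_sq_half_arccos {x : ℝ} (h₁ : -1 ≤ x) (h₂ : x ≤ 1) :
    cos (arccos x / 2) ^ 2 = (1 + x) / 2 := by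
  rw [cos_sq, mul_div_cancel₀ _ two_ne_zero, cos_arccos h₁ h₂]; ring

lemma sin_sq_half_arccos {x : ℝ} (h₁ : -1 ≤ x) (h₂ : x ≤ 1) :
    sin (arccos x / 2) ^ 2 = (1 - x) / 2 := by
  rw [sin_sq, cos_sq_half_arccos h₁ h₂]; ring

/-- The relation `D * N = K * M` of `tan_add_sub_eq_of_tan_eq`, with the denominators cleared. -/
lemma excess_polynomial_identity {D u v w su sv sw : ℝ}
    (hD2 : D ^ 2 = (1 - u ^ 2) * (1 - v ^ 2) - (w - u * v) ^ 2)
    (hsu : su ^ 2 = 1 - u ^ 2) (hsv : sv ^ 2 = 1 - v ^ 2) (hsw : sw ^ 2 = 1 - w ^ 2) :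
    D ^ 2 * ((sw * su + (v - w * u)) * (sv * sw + (u - v * w))
        + (su * sv + (w - u * v)) * (sv * sw + (u - v * w))
        - (su * sv + (w - u * v)) * (sw * su + (v - w * u)) + D ^ 2)
      = (1 + u - v - w)
        * ((su * sv + (w - u * v)) * (sw * su + (v - w * u)) * (sv * sw + (u - v * w))
        + D ^ 2 * ((su * sv + (w - u * v)) + (sw * su + (v - w * u))
          - (sv * sw + (u - v * w)))) := by
  linear_combination (1/2*u*v*w^2 + u*v^2*w - u^2*v*w - 1/2*sw^2*u*v - sv*sw*u*w - sv*sw*u*v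
      + 1/2*sv*sw*u^2 - su*sw*v*w - 1/2*su*sw*v^2 + su*sw*u*v - 1/2*su*sv*w^2 - su*sv*v*w
      + su*sv*u*w + 1/2*su*sv*sw^2 + 1/2*su*sv^2*sw - 1/2*su^2*sv*sw - 1/4*w^3 - u*v*w
      - 1/4*sw^2*w + sv*sw*u + su*sw*v + su*sv*w + 1/2*u*v + 1/2*sv*sw - 1/2*su*sw - 1/2*su*sv
      + D^2 - 3/4*w - v + u + 1) * hD2
    + (-sv*sw*v*w^2 - sv*sw*v^2*w + sv^2*sw^2*w + sv^2*sw^2*v - sv^2*sw^2*u + 1/2*sv*sw*w^2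
      + sv*sw*v*w + 1/2*sv*sw*v^2 + sv*sw*u*w + sv*sw*u*v - 1/2*sv*sw*u^2 - sv^2*sw^2
      - 1/2*D^2*sv*sw - sv*sw*u - 1/2*sv*sw) * hsu
    + (-sw^2*u^2*w - sw^2*u^2*v + sw^2*u^3 - su*sw*u*w^2 + su*sw*u^2*w + sw^2*u^2 - 1/2*su*sw*w^2
      + su*sw*v*w + 1/2*su*sw*v^2 + su*sw*u*w - su*sw*u*v - 1/2*su*sw*u^2 + 1/2*D^2*su*sw + sw^2*w
      + sw^2*v - sw^2*u - su*sw*v - sw^2 + 1/2*su*sw) * hsv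
    + (u^2*v^3 - u^3*v^2 - su*sv*u*v^2 + su*sv*u^2*v + 1/2*u*v^3 - u^2*v^2 + 1/2*u^3*v
      + 1/2*su*sv*w^2 + su*sv*v*w - 1/2*su*sv*v^2 - su*sv*u*w + su*sv*u*v - 1/2*su*sv*u^2
      + 1/2*D^2*u*v + 1/2*D^2*su*sv + 1/4*w^3 - 3/4*v^2*w - v^3 + u*v^2 - 3/4*u^2*w - u^2*v + u^3
      - su*sv*w + 1/4*D^2*w + v^2 - 1/2*u*v + u^2 + 1/2*su*sv + 3/4*w + v - u - 1) * hsw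

lemma tan_add_sub_eq_of_tan_eq {x y z D u v w su sv sw : ℝ} (hD : D ≠ 0)
    (hD2 : D ^ 2 = (1 - u ^ 2) * (1 - v ^ 2) - (w - u * v) ^ 2)
    (hsu : su ^ 2 = 1 - u ^ 2) (hsv : sv ^ 2 = 1 - v ^ 2) (hsw : sw ^ 2 = 1 - w ^ 2)
    (hx : tan x = D / (su * sv + (w - u * v)))
    (hy : tan y = D / (sw * su + (v - w * u)))
    (hz : tan z = D / (sv * sw + (u - v * w))) :
    tan (x + y - z) = (1 + u - v - w) / D := by
  -- each denominator `s + e` satisfies `(s + e) (s - e) = D ^ 2 ≠ 0`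
  have hPA : su * sv + (w - u * v) ≠ 0 := fun h ↦
    hD <| pow_eq_zero_iff two_ne_zero |>.mp <| by
      linear_combination hD2 + (su * sv - (w - u * v)) * h - sv ^ 2 * hsu - (1 - u ^ 2) * hsv
  have hPB : sw * su + (v - w * u) ≠ 0 := fun h ↦
    hD <| pow_eq_zero_iff two_ne_zero |>.mp <| by
      linear_combination hD2 + (sw * su - (v - w * u)) * h - sw ^ 2 * hsu - (1 - u ^ 2) * hsw
  have hPC : sv * sw + (u - v * w) ≠ 0 := fun h ↦
    hD <| pow_eq_zero_iff two_ne_zero |>.mp <| by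
      linear_combination hD2 + (sv * sw - (u - v * w)) * h - sw ^ 2 * hsv - (1 - v ^ 2) * hsw
  have hcos : ∀ θ, tan θ ≠ 0 → cos θ ≠ 0 := fun θ h hc ↦
    h (by rw [tan_eq_sin_div_cos, hc, div_zero])
  rw [tan_add_sub (hcos x (by rw [hx]; exact div_ne_zero hD hPA))
    (hcos y (by rw [hy]; exact div_ne_zero hD hPB))
    (hcos z (by rw [hz]; exact div_ne_zero hD hPC)), hx, hy, hz]
  set PA := su * sv + (w - u * v)
  set PB := sw * su + (v - w * u)
  set PC := sv * sw + (u - v * w)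
  set K := 1 + u - v - w
  set N := D / PA + D / PB - D / PC + D / PA * (D / PB) * (D / PC)
  set M := 1 - D / PA * (D / PB) + D / PA * (D / PC) + D / PB * (D / PC)
  have hP : PA * PB * PC ≠ 0 := mul_ne_zero (mul_ne_zero hPA hPB) hPC
  have hN : N * (PA * PB * PC) = D * (PB * PC + PA * PC - PA * PB) + D ^ 3 := by
    simp only [N]; field_simp
  have hM : M * (PA * PB * PC) = PA * PB * PC + D ^ 2 * (PA + PB - PC) := by
    simp only [M]; field_simp; ring
  have hDN : D * N = K * M := mul_right_cancel₀ hP <| by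
    linear_combination D * hN - K * hM + excess_polynomial_identity hD2 hsu hsv hsw
  have hM0 : M ≠ 0 := by
    intro h0
    have hN0 : N = 0 := by simpa [h0, hD] using hDN
    -- `M + i N = (1 + i D / PA) (1 + i D / PB) (1 - i D / PC)`
    have hsq : N ^ 2 + M ^ 2
        = (1 + (D / PA) ^ 2) * (1 + (D / PB) ^ 2) * (1 + (D / PC) ^ 2) := by
      ring
    have : 0 < N ^ 2 + M ^ 2 := hsq ▸ by positivity
    simp [hN0, h0] at this
  rw [div_eq_div_iff hM0 hD]
  linear_combination hDN

section UnitVectors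

variable {a b c : Fin 3 → ℝ}

lemma one_sub_dot3_sq_pos (ha : dot3 a a = 1) (hb : dot3 b b = 1) (hc : dot3 c c = 1)
    (hD : det3 a b c ≠ 0) : 0 < 1 - dot3 a b ^ 2 := by
  have hlagrange := dot3_sq_add_dot3_cross3_self a b
  have hcauchy := dot3_sq_le (cross3 a b) c
  have hD2 : 0 < dot3 (cross3 a b) c ^ 2 := by positivity
  rw [ha, hb] at hlagrange
  rw [hc] at hcauchy
  linarith

lemma det3_sq_eq (ha : dot3 a a = 1) (hb : dot3 b b = 1) (hc : dot3 c c = 1) :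
    det3 a b c ^ 2 = (1 - dot3 a b ^ 2) * (1 - dot3 a c ^ 2)
      - (dot3 b c - dot3 a b * dot3 a c) ^ 2 := by
  rw [sq, det3_mul_det3, Matrix.det_fin_three]
  simp only [Matrix.of_apply, Matrix.cons_val, ha, hb, hc, dot3_comm b a, dot3_comm c a,
    dot3_comm c b]
  ring

lemma sphAngle_eq_arccos (ha : dot3 a a = 1) (hb : dot3 b b = 1) (hc : dot3 c c = 1) :
    sphAngle a b c = arccos ((dot3 b c - dot3 a b * dot3 a c)
      / (√(1 - dot3 a b ^ 2) * √(1 - dot3 a c ^ 2))) := by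
  simp only [sphAngle, norm3, dot3_sub_smul_sub_smul, ha, hb, hc]
  congr 2 <;> ring_nf

lemma tan_half_sphAngle (ha : dot3 a a = 1) (hb : dot3 b b = 1) (hc : dot3 c c = 1)
    (hD : 0 < det3 a b c) :
    tan (sphAngle a b c / 2) = det3 a b c
      / (√(1 - dot3 a b ^ 2) * √(1 - dot3 a c ^ 2) + (dot3 b c - dot3 a b * dot3 a c)) := by
  have hu := one_sub_dot3_sq_pos ha hb hc hD.ne'
  have hv := one_sub_dot3_sq_pos ha hc hb (by rw [det3_swap₂₃]; exact neg_ne_zero.2 hD.ne')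
  rw [sphAngle_eq_arccos ha hb hc]
  refine tan_half_arccos_div (by positivity) hD.le ?_
  rw [mul_pow, sq_sqrt hu.le, sq_sqrt hv.le, det3_sq_eq ha hb hc]

lemma tan_half_sphAngle_add_sub (ha : dot3 a a = 1) (hb : dot3 b b = 1) (hc : dot3 c c = 1)
    (hD : 0 < det3 a b c) :
    tan ((sphAngle a b c + sphAngle b c a - sphAngle c a b) / 2)
      = (1 + dot3 a b - dot3 a c - dot3 b c) / det3 a b c := by
  have hu := one_sub_dot3_sq_pos ha hb hc hD.ne'
  have hv := one_sub_dot3_sq_pos ha hc hb (by rw [det3_swap₂₃]; exact neg_ne_zero.2 hD.ne')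
  have hw := one_sub_dot3_sq_pos hb hc ha (by rw [det3_rotate]; exact hD.ne')
  have hA := tan_half_sphAngle ha hb hc hD
  have hB := tan_half_sphAngle hb hc ha (by rwa [det3_rotate])
  have hC := tan_half_sphAngle hc ha hb (by rwa [det3_rotate, det3_rotate])
  rw [det3_rotate] at hB
  rw [det3_rotate, det3_rotate] at hC
  simp only [dot3_comm b a, dot3_comm c a, dot3_comm c b] at hB hC
  rw [sub_div, add_div]
  exact tan_add_sub_eq_of_tan_eq hD.ne' (det3_sq_eq ha hb hc) (sq_sqrt hu.le) (sq_sqrt hv.le)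
    (sq_sqrt hw.le) hA hB hC

end UnitVectors

/-- `y - x` is orthogonal to `a` and `b`, hence a multiple of `a × b`; Cauchy–Binet against the
frame `(a, b, a × b)` computes the factor. -/
lemma dot3_cross3_self_mul_det3 {a b x y : Fin 3 → ℝ} (hxa : dot3 x a = dot3 y a)
    (hxb : dot3 x b = dot3 y b) :
    dot3 (cross3 a b) (cross3 a b) * det3 a x y
      = (dot3 a a * dot3 x b - dot3 a b * dot3 x a) * (det3 a b y - det3 a b x) := by
  have hgram := det3_mul_det3 a x y a b (cross3 a b)
  have ha0 : dot3 a (cross3 a b) = 0 := by simp only [dot3, cross3, Matrix.cons_val]; ring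
  rw [Matrix.det_fin_three] at hgram
  simp only [Matrix.of_apply, Matrix.cons_val, ha0, dot3_comm x (cross3 a b),
    dot3_comm y (cross3 a b), ← hxa, ← hxb] at hgram
  simp only [det3] at hgram ⊢
  linear_combination hgram

lemma det3_mul_det3_of_dot3_eq_one {a b c n : Fin 3 → ℝ} (ha : dot3 a a = 1) (hb : dot3 b b = 1)
    (hna : dot3 n a = 1) (hnb : dot3 n b = 1) (hnc : dot3 n c = 1) :
    det3 a b c * det3 a b n = (1 - dot3 a b) * (1 + dot3 a b - dot3 a c - dot3 b c) := by
  rw [det3_mul_det3, Matrix.det_fin_three]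
  simp only [Matrix.of_apply, Matrix.cons_val, ha, hb, dot3_comm _ n, hna, hnb, hnc,
    dot3_comm b a, dot3_comm c a, dot3_comm c b]
  ring

lemma half_det3_dual_eq_weight {a b c e n n' : Fin 3 → ℝ} (ha : dot3 a a = 1)
    (hb : dot3 b b = 1) (hc : dot3 c c = 1) (he : dot3 e e = 1)
    (hD : 0 < det3 a b c) (hD' : 0 < det3 a e b)
    (hna : dot3 n a = 1) (hnb : dot3 n b = 1) (hnc : dot3 n c = 1)
    (hn'a : dot3 n' a = 1) (hn'e : dot3 n' e = 1) (hn'b : dot3 n' b = 1) :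
    1 / 2 * det3 a n' n
      = (tan ((sphAngle a b c + sphAngle b c a - sphAngle c a b) / 2)
          + tan ((sphAngle a e b + sphAngle b a e - sphAngle e b a) / 2))
        / (2 * cos (arccos (dot3 a b) / 2) ^ 2) * sin (arccos (dot3 a b) / 2) ^ 2 := by
  have hu := one_sub_dot3_sq_pos ha hb hc hD.ne'
  have hbae : det3 b a e = det3 a e b := by rw [det3_rotate, det3_rotate]
  have hlagrange := dot3_sq_add_dot3_cross3_self a b
  rw [ha, hb] at hlagrange
  have hpar := dot3_cross3_self_mul_det3 (hn'a.trans hna.symm) (hn'b.trans hnb.symm)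
  have hG := det3_mul_det3_of_dot3_eq_one ha hb hna hnb hnc
  have hG' := det3_mul_det3_of_dot3_eq_one hb ha hn'b hn'a hn'e
  rw [det3_swap₁₂ a b n', hbae] at hG'
  rw [add_comm (sphAngle a e b), tan_half_sphAngle_add_sub ha hb hc hD,
    tan_half_sphAngle_add_sub hb ha he (by rwa [hbae]), hbae,
    cos_sq_half_arccos (by nlinarith) (by nlinarith),
    sin_sq_half_arccos (by nlinarith) (by nlinarith)]
  rw [ha, hn'b, hn'a] at hpar
  rw [dot3_comm b a] at hG' ⊢
  have h1u : 1 - dot3 a b ≠ 0 := fun h ↦ by nlinarith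
  have h1u' : 1 + dot3 a b ≠ 0 := fun h ↦ by nlinarith
  have hDne := hD.ne'
  have hD'ne := hD'.ne'
  have hZ : (1 + dot3 a b) * det3 a n' n = det3 a b n - det3 a b n' :=
    mul_left_cancel₀ h1u (by linear_combination hpar - det3 a n' n * hlagrange)
  field_simp
  linear_combination (det3 a b c * det3 a e b) * hZ + det3 a e b * hG + det3 a b c * hG'

theorem sph_vertex_weight_is_dual_area_general
    (m : ℕ) [NeZero m]
    (p0 : Fin 3 → ℝ) (p : ZMod m → Fin 3 → ℝ)
    (hp0 : norm3 p0 = 1) (hp : ∀ j, norm3 (p j) = 1)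
    (hdet : ∀ j : ZMod m, 0 < det3 p0 (p j) (p (j+1)))
    (n : ZMod m → Fin 3 → ℝ)
    (hn0 : ∀ j : ZMod m, dot3 (n j) p0 = 1)
    (hn1 : ∀ j : ZMod m, dot3 (n j) (p j) = 1)
    (hn2 : ∀ j : ZMod m, dot3 (n j) (p (j+1)) = 1) :
    (1 / 2) * ∑ j : ZMod m, det3 p0 (n (j-1)) (n j) = sphStarVertexWeight m p0 p := by
  have hunit j := dot3_self_eq_one_of_norm3_eq_one (hp j)
  rw [sphStarVertexWeight, Finset.mul_sum]
  refine Finset.sum_congr rfl fun j _ ↦ ?_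
  have hprev := hn2 (j - 1)
  have hdet' := hdet (j - 1)
  rw [sub_add_cancel] at hprev hdet'
  exact half_det3_dual_eq_weight (dot3_self_eq_one_of_norm3_eq_one hp0) (hunit j) (hunit (j + 1))
    (hunit (j - 1)) (hdet j) hdet' (hn0 j) (hn1 j) (hn2 j) (hn0 (j - 1)) (hn1 (j - 1)) hprev

/-- Lemma 2.2, last part (vertex-star form): the algebraic area of the dual polygon
`(n_j)` equals the vertex weight `d₀`. -/
theorem sph_vertex_weight_is_dual_area
    (m : ℕ) (hm : 3 ≤ m) [NeZero m]
    (p0 : Fin 3 → ℝ) (p : ZMod m → Fin 3 → ℝ)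
    (hp0 : norm3 p0 = 1) (hp : ∀ j, norm3 (p j) = 1)
    (hdet : ∀ j : ZMod m, 0 < det3 p0 (p j) (p (j+1)))
    (n : ZMod m → Fin 3 → ℝ)
    (hn0 : ∀ j : ZMod m, dot3 (n j) p0 = 1)
    (hn1 : ∀ j : ZMod m, dot3 (n j) (p j) = 1)
    (hn2 : ∀ j : ZMod m, dot3 (n j) (p (j+1)) = 1) :
    (1 / 2) * ∑ j : ZMod m, det3 p0 (n (j-1)) (n j) = sphStarVertexWeight m p0 p :=
  sph_vertex_weight_is_dual_area_general m p0 p hp0 hp hdet n hn0 hn1 hn2
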